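/- Bossy n-tuple consequence coincides with classical consequence: for all sets of sentences Γ ∪ {A}, Γ ⊨_{n,b} A if and only if Γ ⊨₂ A. -/

import Mathlib

/-- Helper instance so that instance search for the lexicographic order does not get stuck. -/
instance (n : ℕ) : WellFoundedLT (Fin n) := inferInstance

/-- `2^n`: the `n`-fold product of the two-element Boolean algebra `2 = {0,1}` (as `Bool`,
with `false = 0`, `true = 1`), carrying the lexicographic order. -/
abbrev Tup (n : ℕ) := Lex (Fin n → Bool)

/-- The componentwise complement `-⟨x₁,…,xₙ⟩ = ⟨1-x₁,…,1-xₙ⟩` on `2^n`. -/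
def tneg {n : ℕ} (x : Tup n) : Tup n := toLex fun i => !(ofLex x i)

/-- The top value `⟨1,…,1⟩` of `2^n`. -/
def tTop (n : ℕ) : Tup n := toLex fun _ => true

/-- The bottom value `⟨0,…,0⟩` of `2^n`. -/
def tBot (n : ℕ) : Tup n := toLex fun _ => false

/-- The three truth values `f < i < t` (i.e. `0 < 1/2 < 1`). -/
inductive V3 where
  | f | i | t
deriving DecidableEq

instance instFintypeV3 : Fintype V3 :=
  ⟨{V3.f, V3.i, V3.t}, fun x => by cases x <;> simp⟩

def V3.toFin : V3 → Fin 3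
  | .f => 0 | .i => 1 | .t => 2

instance : LinearOrder V3 := LinearOrder.lift' V3.toFin (by decide)

/-- Three-valued negation: `1 - x`. -/
def V3.negv : V3 → V3
  | .t => .f | .i => .i | .f => .t

instance (n : ℕ) : Fintype (Tup n) := Fintype.ofEquiv _ toLex
instance (n : ℕ) : Nonempty (Tup n) := ⟨tBot n⟩
noncomputable instance (n : ℕ) : CompleteLinearOrder (Tup n) :=
  Fintype.toCompleteLinearOrder _
instance : Nonempty V3 := ⟨V3.t⟩
noncomputable instance : CompleteLinearOrder V3 :=
  Fintype.toCompleteLinearOrderOfNonempty _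

/-- Terms of a first-order language: variables and constant symbols. -/
inductive Term (Const : Type) where
  | var : ℕ → Term Const
  | const : Const → Term Const

/-- First-order formulas over predicate symbols `Pred` (with arities `ar`),
constants `Const`, and the connectives `¬, ∧, ∨, ∀, ∃`. -/
inductive FForm (Pred Const : Type) (ar : Pred → ℕ) where
  | atom : (P : Pred) → (Fin (ar P) → Term Const) → FForm Pred Const ar
  | neg : FForm Pred Const ar → FForm Pred Const ar
  | conj : FForm Pred Const ar → FForm Pred Const ar → FForm Pred Const ar
  | disj : FForm Pred Const ar → FForm Pred Const ar → FForm Pred Const ar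
  | all : ℕ → FForm Pred Const ar → FForm Pred Const ar
  | ex : ℕ → FForm Pred Const ar → FForm Pred Const ar

/-- Evaluation of terms, given interpretations of the constants and an assignment. -/
def Term.evalt {Const D : Type} (cv : Const → D) (σ : ℕ → D) : Term Const → D
  | .var x => σ x
  | .const c => cv c

/-- The Clemens valuation over `2^n`: componentwise complement for `¬`, lexicographic
min/max for `∧`/`∨`, and inf/sup over the domain for the quantifiers. -/
noncomputable def fevalT {Pred Const : Type} {ar : Pred → ℕ} {n : ℕ} {D : Type}
    (cv : Const → D) (pv : (P : Pred) → (Fin (ar P) → D) → Tup n) (σ : ℕ → D) :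
    FForm Pred Const ar → Tup n
  | .atom P ts => pv P fun j => (ts j).evalt cv σ
  | .neg A => tneg (fevalT cv pv σ A)
  | .conj A B => min (fevalT cv pv σ A) (fevalT cv pv σ B)
  | .disj A B => max (fevalT cv pv σ A) (fevalT cv pv σ B)
  | .all x A => ⨅ d : D, fevalT cv pv (Function.update σ x d) A
  | .ex x A => ⨆ d : D, fevalT cv pv (Function.update σ x d) A

/-- The three-valued (strong Kleene / LP) valuation over `{0, 1/2, 1}`: `1 - x` for `¬`,
min/max for `∧`/`∨`, and inf/sup over the domain for the quantifiers. -/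
noncomputable def feval3 {Pred Const : Type} {ar : Pred → ℕ} {D : Type}
    (cv : Const → D) (pv : (P : Pred) → (Fin (ar P) → D) → V3) (σ : ℕ → D) :
    FForm Pred Const ar → V3
  | .atom P ts => pv P fun j => (ts j).evalt cv σ
  | .neg A => (feval3 cv pv σ A).negv
  | .conj A B => min (feval3 cv pv σ A) (feval3 cv pv σ B)
  | .disj A B => max (feval3 cv pv σ A) (feval3 cv pv σ B)
  | .all x A => ⨅ d : D, feval3 cv pv (Function.update σ x d) A
  | .ex x A => ⨆ d : D, feval3 cv pv (Function.update σ x d) A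

/-- Classical two-valued valuation of first-order formulas (predicates interpreted as
`Prop`-valued relations). -/
def fevalC {Pred Const : Type} {ar : Pred → ℕ} {D : Type}
    (cv : Const → D) (pv : (P : Pred) → (Fin (ar P) → D) → Prop) (σ : ℕ → D) :
    FForm Pred Const ar → Prop
  | .atom P ts => pv P fun j => (ts j).evalt cv σ
  | .neg A => ¬ fevalC cv pv σ A
  | .conj A B => fevalC cv pv σ A ∧ fevalC cv pv σ B
  | .disj A B => fevalC cv pv σ A ∨ fevalC cv pv σ B
  | .all x A => ∀ d : D, fevalC cv pv (Function.update σ x d) A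
  | .ex x A => ∃ d : D, fevalC cv pv (Function.update σ x d) A

/-- Classical first-order consequence `Γ ⊨₂ A`. -/
def Conseq2 (Pred Const : Type) (ar : Pred → ℕ)
    (Γ : Set (FForm Pred Const ar)) (A : FForm Pred Const ar) : Prop :=
  ∀ (D : Type) (_ : Nonempty D) (cv : Const → D)
    (pv : (P : Pred) → (Fin (ar P) → D) → Prop) (σ : ℕ → D),
    (∀ B ∈ Γ, fevalC cv pv σ B) → fevalC cv pv σ A

/-- Bossy consequence `Γ ⊨_{n,b} A`: preservation of "first component equals `1`". -/
def ConseqB (n : ℕ) (hn : 0 < n) (Pred Const : Type) (ar : Pred → ℕ)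
    (Γ : Set (FForm Pred Const ar)) (A : FForm Pred Const ar) : Prop :=
  ∀ (D : Type) (_ : Nonempty D) (cv : Const → D)
    (pv : (P : Pred) → (Fin (ar P) → D) → Tup n) (σ : ℕ → D),
    (∀ B ∈ Γ, ofLex (fevalT cv pv σ B) ⟨0, hn⟩ = true) →
      ofLex (fevalT cv pv σ A) ⟨0, hn⟩ = true

/-!
Only the first component matters. Projection onto it is monotone for the lexicographic order, so
it commutes with `min` and `max`, and, the order being finite so that infima and suprema over the
domain are attained, with the quantifiers; complement is componentwise. Hence the first component
of a Clemens value is the classical truth value in the interpretation that keeps the first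
components of the atoms. Conversely a classical interpretation is the first-component shadow of
the one sending true and false to the constant tuples `⟨1,…,1⟩` and `⟨0,…,0⟩`.
-/

section MonotonePred

variable {α : Type*} {p : α → Prop}

theorem Monotone.apply_min_iff [LinearOrder α] (hp : Monotone p) (a b : α) :
    p (min a b) ↔ p a ∧ p b :=
  ⟨fun h => ⟨hp (min_le_left a b) h, hp (min_le_right a b) h⟩,
    fun ⟨ha, hb⟩ => by rcases min_choice a b with h | h <;> rwa [h]⟩

theorem Monotone.apply_max_iff [LinearOrder α] (hp : Monotone p) (a b : α) :
    p (max a b) ↔ p a ∨ p b :=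
  ⟨fun h => (max_choice a b).elim (fun e => .inl (e ▸ h)) (fun e => .inr (e ▸ h)),
    fun h => h.elim (hp (le_max_left a b)) (hp (le_max_right a b))⟩

variable [CompleteLinearOrder α] [Finite α] {ι : Sort*} [Nonempty ι]

theorem Monotone.apply_iInf_iff_of_finite (hp : Monotone p) (f : ι → α) :
    p (⨅ i, f i) ↔ ∀ i, p (f i) := by
  refine ⟨fun h i => hp (iInf_le f i) h, fun h => ?_⟩
  obtain ⟨i, hi⟩ := (Set.range_nonempty f).csInf_mem (Set.toFinite _)
  rw [iInf, ← hi]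
  exact h i

theorem Monotone.apply_iSup_iff_of_finite (hp : Monotone p) (f : ι → α) :
    p (⨆ i, f i) ↔ ∃ i, p (f i) := by
  refine ⟨fun h => ?_, fun ⟨i, hi⟩ => hp (le_iSup f i) hi⟩
  obtain ⟨i, hi⟩ := (Set.range_nonempty f).csSup_mem (Set.toFinite _)
  rw [iSup, ← hi] at h
  exact ⟨i, h⟩

end MonotonePred

section Bossy

variable {n : ℕ} (hn : 0 < n)

theorem firstBit_ite_tTop_tBot_eq_true_iff (p : Prop) [Decidable p] :
    ofLex (if p then tTop n else tBot n) ⟨0, hn⟩ = true ↔ p := by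
  by_cases hp : p <;> simp [hp, tTop, tBot]

theorem monotone_firstBit_eq_true : Monotone fun x : Tup n => ofLex x ⟨0, hn⟩ = true := by
  intro x y hxy hx
  have : true ≤ ofLex y ⟨0, hn⟩ :=
    hx ▸ Pi.apply_le_of_toLex (x := ofLex x) hxy fun j hj => absurd hj (Nat.not_lt_zero _)
  exact top_le_iff.mp this

variable {Pred Const : Type} {ar : Pred → ℕ} {D : Type} [Nonempty D] (cv : Const → D)

theorem fevalT_firstBit_eq_true_iff (pv : (P : Pred) → (Fin (ar P) → D) → Tup n)
    (σ : ℕ → D) (A : FForm Pred Const ar) :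
    ofLex (fevalT cv pv σ A) ⟨0, hn⟩ = true ↔
      fevalC cv (fun P v => ofLex (pv P v) ⟨0, hn⟩ = true) σ A := by
  have hp := monotone_firstBit_eq_true hn
  -- `fevalT` takes its infima and suprema from the lexicographic `sInf`/`sSup` of Mathlib,
  -- not from the `Fintype` instance on `Tup n`.
  let : CompleteLinearOrder (Tup n) := Pi.Lex.instCompleteLinearOrderLexForall
  induction A generalizing σ with
  | atom P ts => rfl
  | neg A ih => simpa [fevalT, fevalC, tneg] using not_congr (ih σ)
  | conj A B ihA ihB => exact (hp.apply_min_iff _ _).trans (and_congr (ihA σ) (ihB σ))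
  | disj A B ihA ihB => exact (hp.apply_max_iff _ _).trans (or_congr (ihA σ) (ihB σ))
  | all x A ih =>
    rw [fevalT, fevalC]
    exact (hp.apply_iInf_iff_of_finite _).trans (forall_congr' fun d => ih (Function.update σ x d))
  | ex x A ih =>
    rw [fevalT, fevalC]
    exact (hp.apply_iSup_iff_of_finite _).trans (exists_congr fun d => ih (Function.update σ x d))

end Bossy

theorem conseqB_iff_conseq2 {n : ℕ} (hn : 0 < n) (Pred Const : Type) (ar : Pred → ℕ)
    (Γ : Set (FForm Pred Const ar)) (A : FForm Pred Const ar) :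
    ConseqB n hn Pred Const ar Γ A ↔ Conseq2 Pred Const ar Γ A := by
  classical
  constructor
  · intro h D _ cv pv σ hΓ
    let pvT : (P : Pred) → (Fin (ar P) → D) → Tup n :=
      fun P v => if pv P v then tTop n else tBot n
    have hpv : (fun P v => ofLex (pvT P v) ⟨0, hn⟩ = true) = pv :=
      funext₂ fun P v => propext (firstBit_ite_tTop_tBot_eq_true_iff hn _)
    have key := fevalT_firstBit_eq_true_iff hn cv pvT σ
    rw [hpv] at key
    exact (key A).1 (h D ‹_› cv pvT σ fun B hB => (key B).2 (hΓ B hB))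
  · intro h D _ cv pv σ hΓ
    simp only [fevalT_firstBit_eq_true_iff] at hΓ ⊢
    exact h D ‹_› cv _ σ hΓ

/-- bossy `n`-tuple consequence coincides with classical consequence. -/
theorem bossy_iff_classical (n : ℕ) (hn : 2 ≤ n) (Pred Const : Type) (ar : Pred → ℕ)
    (Γ : Set (FForm Pred Const ar)) (A : FForm Pred Const ar) :
    ConseqB n (by omega) Pred Const ar Γ A ↔ Conseq2 Pred Const ar Γ A :=
  conseqB_iff_conseq2 _ Pred Const ar Γ A
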